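/- arXiv:2310.07108 — 3 statements merged into one kernel-verified Lean document; each statement's English description precedes it below -/
import Mathlib

section
/- Let F be a finite-dimensional real inner product space and A : F →ₗ[ℝ] F a self-adjoint, positive semidefinite linear map (⟪A x, y⟫ = ⟪x, A y⟫ for all x, y, and ⟪x, A x⟫ ≥ 0 for all x). Let K := ker A, let W be a subspace of F, let P_K and P_W denote the orthogonal projections onto K and W, and set C := ‖P_K ∘ (id − P_W)‖ (operator norm). Suppose λ₁ > 0 satisfies ⟪w, A w⟫ ≥ λ₁ ‖w‖² for all w in the orthogonal complement Kᗮ of K (λ₁ is the smallest positive eigenvalue of A). Then every unit vector v orthogonal to W satisfies ⟪v, A v⟫ ≥ (1 − C²) λ₁. -/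
/-!
Split a unit vector `v ⟂ W` as `v = P_K v + P_{Kᗮ} v` with `K = ker A`. By symmetry of `A` the
kernel part does not contribute to the quadratic form, so `⟪v, A v⟫ = ⟪w, A w⟫` for
`w = P_{Kᗮ} v`, which is at least `λ₁ ‖w‖² = λ₁ (1 - ‖P_K v‖²)` by Pythagoras. Since
`id - P_W = P_{Wᗮ}` fixes `v`, we have `P_K v = P_K (id - P_W) v`, whence `‖P_K v‖ ≤ C`.
-/

open scoped RealInnerProductSpace

namespace LinearMap.IsSymmetric

variable {F : Type*} [NormedAddCommGroup F] [InnerProductSpace ℝ F] {A : F →ₗ[ℝ] F}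

theorem inner_add_map_add_of_mem_ker (hA : A.IsSymmetric) {x : F} (hx : x ∈ ker A) (y : F) :
    ⟪x + y, A (x + y)⟫ = ⟪y, A y⟫ := by
  rw [map_add, mem_ker.mp hx, zero_add, inner_add_left, ← hA, mem_ker.mp hx, inner_zero_left,
    zero_add]

theorem inner_starProjection_orthogonal_ker (hA : A.IsSymmetric)
    [(ker A).HasOrthogonalProjection] (v : F) :
    ⟪(ker A)ᗮ.starProjection v, A ((ker A)ᗮ.starProjection v)⟫ = ⟪v, A v⟫ := by
  conv_rhs => rw [← (ker A).starProjection_add_starProjection_orthogonal v]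
  exact (hA.inner_add_map_add_of_mem_ker ((ker A).starProjection_apply_mem v) _).symm

end LinearMap.IsSymmetric

namespace Submodule

variable {𝕜 E : Type*} [RCLike 𝕜] [NormedAddCommGroup E] [InnerProductSpace 𝕜 E]

theorem norm_starProjection_le_opNorm_comp_of_mem (K : Submodule 𝕜 E) {W : Submodule 𝕜 E}
    [K.HasOrthogonalProjection] [W.HasOrthogonalProjection] {v : E} (hv : v ∈ W) :
    ‖K.starProjection v‖ ≤ ‖K.starProjection ∘L W.starProjection‖ * ‖v‖ := by
  simpa [starProjection_eq_self_iff.mpr hv] using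
    (K.starProjection ∘L W.starProjection).le_opNorm v

end Submodule

theorem stmt_2_general {F : Type*} [NormedAddCommGroup F] [InnerProductSpace ℝ F]
    [FiniteDimensional ℝ F]
    (A : F →ₗ[ℝ] F)
    (hsa : ∀ x y : F, ⟪A x, y⟫ = ⟪x, A y⟫)
    (W : Submodule ℝ F) (C : ℝ)
    (hC : C = ‖(((LinearMap.ker A).subtypeL.comp
        (LinearMap.ker A).orthogonalProjectionOnto).comp
        (ContinuousLinearMap.id ℝ F - W.subtypeL.comp W.orthogonalProjectionOnto))‖)
    (lam : ℝ) (hlam : 0 < lam)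
    (hmin : ∀ w ∈ (LinearMap.ker A)ᗮ, lam * ‖w‖ ^ 2 ≤ ⟪w, A w⟫)
    (v : F) (hv : ‖v‖ = 1) (hvW : v ∈ Wᗮ) :
    (1 - C ^ 2) * lam ≤ ⟪v, A v⟫ := by
  set K := LinearMap.ker A
  have hC' : C = ‖K.starProjection ∘L Wᗮ.starProjection‖ := by
    rw [hC, W.starProjection_orthogonal]
    rfl
  have hPK : ‖K.starProjection v‖ ≤ C := by
    simpa [hC', hv] using K.norm_starProjection_le_opNorm_comp_of_mem hvW
  have hpyth : 1 = ‖K.starProjection v‖ ^ 2 + ‖Kᗮ.starProjection v‖ ^ 2 := by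
    rw [← K.norm_sq_eq_add_norm_sq_starProjection v, hv, one_pow]
  calc (1 - C ^ 2) * lam ≤ (1 - ‖K.starProjection v‖ ^ 2) * lam := by gcongr
    _ = lam * ‖Kᗮ.starProjection v‖ ^ 2 := by rw [hpyth]; ring
    _ ≤ ⟪Kᗮ.starProjection v, A (Kᗮ.starProjection v)⟫ :=
      hmin _ (Kᗮ.starProjection_apply_mem v)
    _ = ⟪v, A v⟫ := LinearMap.IsSymmetric.inner_starProjection_orthogonal_ker hsa v

theorem stmt_2 {F : Type*} [NormedAddCommGroup F] [InnerProductSpace ℝ F]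
    [FiniteDimensional ℝ F]
    (A : F →ₗ[ℝ] F)
    (hsa : ∀ x y : F, ⟪A x, y⟫ = ⟪x, A y⟫)
    (hpsd : ∀ x : F, 0 ≤ ⟪x, A x⟫)
    (W : Submodule ℝ F) (C : ℝ)
    (hC : C = ‖(((LinearMap.ker A).subtypeL.comp
        (LinearMap.ker A).orthogonalProjectionOnto).comp
        (ContinuousLinearMap.id ℝ F - W.subtypeL.comp W.orthogonalProjectionOnto))‖)
    (lam : ℝ) (hlam : 0 < lam)
    (hmin : ∀ w ∈ (LinearMap.ker A)ᗮ, lam * ‖w‖ ^ 2 ≤ ⟪w, A w⟫)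
    (v : F) (hv : ‖v‖ = 1) (hvW : v ∈ Wᗮ) :
    (1 - C ^ 2) * lam ≤ ⟪v, A v⟫ :=
  stmt_2_general A hsa W C hC lam hlam hmin v hv hvW
end

section
/- Let F be a finite-dimensional real inner product space, E : F → ℝ twice continuously differentiable, and n a natural number. For each j : Fin n, let A_j : ℝ → (F →L[ℝ] F) satisfy: A_j 0 = id, each A_j t is bijective, t ↦ A_j t U is differentiable at 0, t ↦ fderiv ℝ E (A_j t U) is differentiable at 0, and E (A_j t x) = E x for all t and x. Suppose fderiv ℝ E U = 0 and set w_j := deriv (fun t => A_j t U) 0. Then the linear span of {w_j : j ∈ Fin n} is contained in the kernel of the Hessian map H := fderiv ℝ (fun x => fderiv ℝ E x) U : F →L[ℝ] (F →L[ℝ] ℝ); in particular, the dimension of the kernel of H (as a linear map) is at least the dimension of the span of {w_j : j ∈ Fin n}. -/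
/-! Invariance `E ∘ A t = E` and the chain rule give `DE(A t U) ∘ A t = DE(U) = 0`, so by
surjectivity of `A t` the whole orbit `t ↦ A t U` consists of critical points. Differentiating
`t ↦ DE(A t U) = 0` at `t = 0` along the orbit gives `D²E(U) w = 0` for its tangent vector `w`. -/

section

variable {𝕜 : Type*} [NontriviallyNormedField 𝕜]
  {F : Type*} [NormedAddCommGroup F] [NormedSpace 𝕜 F]
  {G : Type*} [NormedAddCommGroup G] [NormedSpace 𝕜 G]

theorem fderiv_apply_eq_zero_of_comp_eq_self {E : F → G} {L : F →L[𝕜] F} {x : F}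
    (hE : DifferentiableAt 𝕜 E (L x)) (hL : Function.Surjective L) (hEL : E ∘ L = E)
    (hx : fderiv 𝕜 E x = 0) : fderiv 𝕜 E (L x) = 0 := by
  have hcomp : 0 = (fderiv 𝕜 E (L x)).comp L := by
    simpa only [hEL, hx, L.fderiv] using fderiv_comp x hE L.differentiableAt
  ext y
  obtain ⟨z, rfl⟩ := hL y
  exact (DFunLike.congr_fun hcomp z).symm

theorem fderiv_apply_deriv_eq_zero_of_comp_eq_const {g : F → G} {c : 𝕜 → F} {t₀ : 𝕜} {v : G}
    (hg : DifferentiableAt 𝕜 g (c t₀)) (hc : DifferentiableAt 𝕜 c t₀) (hgc : ∀ t, g (c t) = v) :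
    fderiv 𝕜 g (c t₀) (deriv c t₀) = 0 := by
  rw [← fderiv_comp_deriv t₀ hg hc, show g ∘ c = fun _ => v from funext hgc, deriv_const]

end

theorem stmt_8_general {F : Type*} [NormedAddCommGroup F] [InnerProductSpace ℝ F]
    [FiniteDimensional ℝ F]
    (E : F → ℝ) (hE : ContDiff ℝ 2 E) (n : ℕ)
    (A : Fin n → ℝ → (F →L[ℝ] F)) (U : F)
    (hA0 : ∀ j, A j 0 = ContinuousLinearMap.id ℝ F)
    (hbij : ∀ j (t : ℝ), Function.Bijective (A j t))
    (hdiff : ∀ j, DifferentiableAt ℝ (fun t : ℝ => A j t U) 0)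
    (hinv : ∀ j (t : ℝ) (x : F), E (A j t x) = E x)
    (hcrit : fderiv ℝ E U = 0) :
    Submodule.span ℝ (Set.range fun j => deriv (fun t : ℝ => A j t U) 0) ≤
        LinearMap.ker ((fderiv ℝ (fun x => fderiv ℝ E x) U : F →L[ℝ] F →L[ℝ] ℝ) : F →ₗ[ℝ] F →L[ℝ] ℝ) ∧
      Module.finrank ℝ
          (Submodule.span ℝ (Set.range fun j => deriv (fun t : ℝ => A j t U) 0)) ≤
        Module.finrank ℝ (LinearMap.ker ((fderiv ℝ (fun x => fderiv ℝ E x) U : F →L[ℝ] F →L[ℝ] ℝ) : F →ₗ[ℝ] F →L[ℝ] ℝ)) := by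
  have hE' : Differentiable ℝ E := hE.differentiable two_ne_zero
  have hDE : Differentiable ℝ (fderiv ℝ E) :=
    (hE.fderiv_right (m := 1) le_rfl).differentiable one_ne_zero
  have horbit : ∀ j t, fderiv ℝ E (A j t U) = 0 := fun j t =>
    fderiv_apply_eq_zero_of_comp_eq_self (hE' _) (hbij j t).2 (funext (hinv j t)) hcrit
  have hspan : Submodule.span ℝ (Set.range fun j => deriv (fun t : ℝ => A j t U) 0) ≤
      LinearMap.ker ((fderiv ℝ (fun x => fderiv ℝ E x) U : F →L[ℝ] F →L[ℝ] ℝ) :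
        F →ₗ[ℝ] F →L[ℝ] ℝ) := by
    rw [Submodule.span_le]
    rintro _ ⟨j, rfl⟩
    have hU : A j 0 U = U := by simp [hA0 j]
    have hw := fderiv_apply_deriv_eq_zero_of_comp_eq_const (hDE _) (hdiff j) (horbit j)
    rwa [hU] at hw
  exact ⟨hspan, Submodule.finrank_mono hspan⟩

theorem stmt_8 {F : Type*} [NormedAddCommGroup F] [InnerProductSpace ℝ F]
    [FiniteDimensional ℝ F]
    (E : F → ℝ) (hE : ContDiff ℝ 2 E) (n : ℕ)
    (A : Fin n → ℝ → (F →L[ℝ] F)) (U : F)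
    (hA0 : ∀ j, A j 0 = ContinuousLinearMap.id ℝ F)
    (hbij : ∀ j (t : ℝ), Function.Bijective (A j t))
    (hdiff : ∀ j, DifferentiableAt ℝ (fun t : ℝ => A j t U) 0)
    (hdiff2 : ∀ j, DifferentiableAt ℝ (fun t : ℝ => fderiv ℝ E (A j t U)) 0)
    (hinv : ∀ j (t : ℝ) (x : F), E (A j t x) = E x)
    (hcrit : fderiv ℝ E U = 0) :
    Submodule.span ℝ (Set.range fun j => deriv (fun t : ℝ => A j t U) 0) ≤
        LinearMap.ker ((fderiv ℝ (fun x => fderiv ℝ E x) U : F →L[ℝ] F →L[ℝ] ℝ) : F →ₗ[ℝ] F →L[ℝ] ℝ) ∧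
      Module.finrank ℝ
          (Submodule.span ℝ (Set.range fun j => deriv (fun t : ℝ => A j t U) 0)) ≤
        Module.finrank ℝ (LinearMap.ker ((fderiv ℝ (fun x => fderiv ℝ E x) U : F →L[ℝ] F →L[ℝ] ℝ) : F →ₗ[ℝ] F →L[ℝ] ℝ)) :=
  stmt_8_general E hE n A U hA0 hbij hdiff hinv hcrit
end

section
/- Let n be a natural number, S a finite set of integer vectors (a Finset of Fin n → ℤ), and c : (Fin n → ℤ) → ℂ a function with c k ≠ 0 for every k ∈ S. Define the real-linear map T : (Fin n → ℝ) →ₗ[ℝ] (S → ℂ) by (T α) k = ((∑ i, α i * ((k : Fin n → ℤ) i : ℝ)) : ℝ) • c k. Then the rank of T equals the dimension of the real span of the image of S in Fin n → ℝ under coordinatewise coercion, i.e. finrank ℝ (range T) = finrank ℝ (Submodule.span ℝ {(fun i => ((k i : ℝ))) | k ∈ S}). -/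
/-!
`T` factors as `α ↦ (⟪k, α⟫)_{k ∈ S}`, i.e. multiplication by the matrix whose rows are the
vectors of `S`, followed by the componentwise scaling by the nonzero `c k`, which is injective.
So the rank of `T` is the row rank of that matrix.
-/

open Module

theorem LinearMap.finrank_range_comp_of_injective {K U V W : Type*} [Semiring K]
    [AddCommMonoid U] [Module K U] [AddCommMonoid V] [Module K V] [AddCommMonoid W] [Module K W]
    (f : U →ₗ[K] V) {g : V →ₗ[K] W} (hg : Function.Injective g) :
    finrank K (range (g ∘ₗ f)) = finrank K (range f) := by
  rw [range_comp]
  exact (Submodule.equivMapOfInjective g hg _).finrank_eq.symm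

def LinearMap.smulPi (K : Type*) {ι V : Type*} [Semiring K] [AddCommMonoid V] [Module K V]
    (c : ι → V) : (ι → K) →ₗ[K] (ι → V) :=
  LinearMap.pi fun k => (LinearMap.proj k).smulRight (c k)

theorem LinearMap.smulPi_apply {K ι V : Type*} [Semiring K] [AddCommMonoid V] [Module K V]
    (c : ι → V) (x : ι → K) (k : ι) : smulPi K c x k = x k • c k := rfl

theorem LinearMap.smulPi_injective {K ι V : Type*} [Ring K] [AddCommGroup V] [Module K V]
    [NoZeroSMulDivisors K V] {c : ι → V} (hc : ∀ k, c k ≠ 0) :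
    Function.Injective (smulPi K c) := by
  refine (injective_iff_map_eq_zero _).2 fun x hx => funext fun k => ?_
  exact (eq_zero_or_eq_zero_of_smul_eq_zero (congr_fun hx k)).resolve_right (hc k)

theorem stmt_10 (n : ℕ) (S : Finset (Fin n → ℤ)) (c : (Fin n → ℤ) → ℂ)
    (hc : ∀ k ∈ S, c k ≠ 0)
    (T : (Fin n → ℝ) →ₗ[ℝ] (S → ℂ))
    (hT : ∀ (α : Fin n → ℝ) (k : S),
      T α k = (∑ i, α i * ((k : Fin n → ℤ) i : ℝ)) • c k) :
    Module.finrank ℝ (LinearMap.range T) =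
      Module.finrank ℝ
        (Submodule.span ℝ {x : Fin n → ℝ | ∃ k ∈ S, x = fun i => ((k i : ℝ))}) := by
  let A : Matrix S (Fin n) ℝ := Matrix.of fun k i => (k.1 i : ℝ)
  have hTA : T = LinearMap.smulPi ℝ (fun k : S => c k) ∘ₗ A.mulVecLin := by
    refine LinearMap.ext fun α => funext fun k => ?_
    simp [hT, LinearMap.smulPi_apply, A, Matrix.mulVec, dotProduct, mul_comm]
  have hrows : Set.range A.row = {x : Fin n → ℝ | ∃ k ∈ S, x = fun i => ((k i : ℝ))} := by
    ext x
    exact ⟨fun ⟨⟨k, hk⟩, hx⟩ => ⟨k, hk, hx.symm⟩, fun ⟨k, hk, hx⟩ => ⟨⟨k, hk⟩, hx.symm⟩⟩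
  rw [hTA, LinearMap.finrank_range_comp_of_injective _
    (LinearMap.smulPi_injective fun k : S => hc k k.2), ← hrows, ← A.rank_eq_finrank_span_row]
  rfl
end
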